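/- arXiv:1401.3147 — 2 statements merged into one kernel-verified Lean document; each statement's English description precedes it below -/
import Mathlib

section
/- Let G be a weighted finite graph and 1 ≤ k ≤ N with h(k) + h̄(k) = 1. Let {(V_{2i−1}, V_{2i})}_{i=1}^k be any k-sub-bipartition attaining the maximum in the definition of h̄(k), and let i₀ ∈ {1,…,k} be an index attaining max_{1≤i≤k} φ(V_{2i−1} ∪ V_{2i}). Then the pair (V_{2i₀−1}, V_{2i₀}) is bipartite in the sense that |E(V_{2i₀−1}, V_{2i₀−1})| = |E(V_{2i₀}, V_{2i₀})| = 0. -/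
open Finset

namespace DualCheeger

variable {N : ℕ}

/-- The degree of a vertex `u`: `d_u = ∑_v w u v`. -/
def degree (w : Fin N → Fin N → ℝ) (u : Fin N) : ℝ := ∑ v, w u v

/-- A weighted finite graph structure on `Fin N`: symmetric nonnegative weights,
no self-loops, and strictly positive degrees. -/
def IsWeightedGraph (w : Fin N → Fin N → ℝ) : Prop :=
  (∀ u v, w u v = w v u) ∧ (∀ u v, 0 ≤ w u v) ∧ (∀ u, w u u = 0) ∧
    ∀ u, 0 < degree w u

/-- `|E(A,B)| = ∑_{u ∈ A} ∑_{v ∈ B} w u v`. -/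
def Ew (w : Fin N → Fin N → ℝ) (A B : Finset (Fin N)) : ℝ :=
  ∑ u ∈ A, ∑ v ∈ B, w u v

/-- `vol(A) = ∑_{u ∈ A} d_u`. -/
def vol (w : Fin N → Fin N → ℝ) (A : Finset (Fin N)) : ℝ := ∑ u ∈ A, degree w u

/-- The expansion `φ(S) = |E(S, Sᶜ)| / vol(S)`. -/
noncomputable def expansion (w : Fin N → Fin N → ℝ) (S : Finset (Fin N)) : ℝ :=
  Ew w S Sᶜ / vol w S

/-- `φ̄(V₁,V₂) = 2|E(V₁,V₂)| / vol(V₁ ∪ V₂)`. -/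
noncomputable def phibar (w : Fin N → Fin N → ℝ) (V₁ V₂ : Finset (Fin N)) : ℝ :=
  2 * Ew w V₁ V₂ / vol w (V₁ ∪ V₂)

/-- A `k`-subpartition: `k` nonempty pairwise disjoint subsets. -/
def IsSubpartition (k : ℕ) (P : Fin k → Finset (Fin N)) : Prop :=
  (∀ i, (P i).Nonempty) ∧ ∀ i j, i ≠ j → Disjoint (P i) (P j)

/-- The `k`-way Cheeger constant `h(k)`. -/
noncomputable def cheeger (w : Fin N → Fin N → ℝ) (k : ℕ) : ℝ :=
  sInf { x | ∃ P : Fin k → Finset (Fin N), IsSubpartition k P ∧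
    x = ⨆ i, expansion w (P i) }

/-- A `k`-sub-bipartition: `k` pairs of subsets, all `2k` subsets pairwise
disjoint, with each union `V_{2i-1} ∪ V_{2i}` nonempty. -/
def IsSubBipartition (k : ℕ) (P : Fin k → Finset (Fin N) × Finset (Fin N)) : Prop :=
  (∀ i, Disjoint (P i).1 (P i).2) ∧
    (∀ i j, i ≠ j → Disjoint ((P i).1 ∪ (P i).2) ((P j).1 ∪ (P j).2)) ∧
    ∀ i, ((P i).1 ∪ (P i).2).Nonempty

/-- The `k`-way dual Cheeger constant `h̄(k)`. -/
noncomputable def dualCheeger (w : Fin N → Fin N → ℝ) (k : ℕ) : ℝ :=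
  sSup { x | ∃ P : Fin k → Finset (Fin N) × Finset (Fin N), IsSubBipartition k P ∧
    x = ⨅ i, phibar w (P i).1 (P i).2 }

/-- `lam` enumerates the eigenvalues of the normalized Laplacian
`Δ f (u) = f u - d_u⁻¹ ∑_v w u v * f v` in nondecreasing order with multiplicity,
witnessed by a `μ`-orthonormal eigenbasis `f`. -/
def IsLapEigenbasis (w : Fin N → Fin N → ℝ) (lam : Fin N → ℝ)
    (f : Fin N → Fin N → ℝ) : Prop :=
  Monotone lam ∧
    (∀ i j, (∑ u, degree w u * f i u * f j u) = if i = j then (1 : ℝ) else 0) ∧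
    ∀ i u, f i u - (degree w u)⁻¹ * ∑ v, w u v * f i v = lam i * f i u

/-- The dual Rayleigh quotient of a function `f : V → ℝ`. -/
noncomputable def dualRayleigh (w : Fin N → Fin N → ℝ) (f : Fin N → ℝ) : ℝ :=
  (1 / 2 * ∑ u, ∑ v, w u v * (f u + f v) ^ 2) / ∑ u, degree w u * f u ^ 2

/-- The dual Rayleigh quotient of a map `F : V → ℝ^k`. -/
noncomputable def dualRayleighVec (w : Fin N → Fin N → ℝ) {k : ℕ}
    (F : Fin N → EuclideanSpace ℝ (Fin k)) : ℝ :=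
  (1 / 2 * ∑ u, ∑ v, w u v * ‖F u + F v‖ ^ 2) / ∑ u, degree w u * ‖F u‖ ^ 2

/-- The rough projective-space distance `d̄_F` between (the projections of)
`F u` and `F v`. -/
noncomputable def dbar {k : ℕ} (F : Fin N → EuclideanSpace ℝ (Fin k))
    (u v : Fin N) : ℝ :=
  min ‖‖F u‖⁻¹ • F u - ‖F v‖⁻¹ • F v‖ ‖‖F u‖⁻¹ • F u + ‖F v‖⁻¹ • F v‖

/-- The `l²` mass of `F` on `S`: `ℰ_S = ∑_{u ∈ S} d_u ‖F u‖²`. -/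
noncomputable def mass (w : Fin N → Fin N → ℝ) {k : ℕ}
    (F : Fin N → EuclideanSpace ℝ (Fin k)) (S : Finset (Fin N)) : ℝ :=
  ∑ u ∈ S, degree w u * ‖F u‖ ^ 2

/-- The distance `d̄_F(v, T)` from a vertex to a set. -/
noncomputable def dbarSet {k : ℕ} (F : Fin N → EuclideanSpace ℝ (Fin k))
    (v : Fin N) (T : Set (Fin N)) : ℝ :=
  sInf { x | ∃ t ∈ T, x = dbar F v t }

/-- The modified dual Cheeger constant `h̄*(k)`. -/
noncomputable def dualCheegerStar (w : Fin N → Fin N → ℝ) (k : ℕ) : ℝ :=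
  sSup { x | ∃ P : Fin k → Finset (Fin N) × Finset (Fin N), IsSubBipartition k P ∧
    x = ⨅ i, (2 * Ew w (P i).1 (P i).2 + 1 / 2 * Ew w ((P i).1 ∪ (P i).2)
        (Finset.univ \ Finset.univ.biUnion (fun j => (P j).1 ∪ (P j).2))) /
      vol w ((P i).1 ∪ (P i).2) }

/-- `G` is bipartite: `V = A ∪ Aᶜ` with no edges inside `A` nor inside `Aᶜ`. -/
def IsBipartite (w : Fin N → Fin N → ℝ) : Prop :=
  ∃ A : Finset (Fin N), (∀ u ∈ A, ∀ v ∈ A, w u v = 0) ∧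
    ∀ u ∈ Aᶜ, ∀ v ∈ Aᶜ, w u v = 0

/-- The equivalence relation generated by adjacency (connected components). -/
def Reach (w : Fin N → Fin N → ℝ) : Fin N → Fin N → Prop :=
  Relation.EqvGen fun u v => 0 < w u v

/-- `w` is the weight function of a weighted cycle on `Fin N`: symmetric,
nonnegative, and positive exactly on consecutive vertices mod `N`. -/
def IsCycleWeight (N : ℕ) (w : Fin N → Fin N → ℝ) : Prop :=
  (∀ u v, w u v = w v u) ∧ (∀ u v, 0 ≤ w u v) ∧
    ∀ i j : Fin N, 0 < w i j ↔ ((i.val + 1) % N = j.val ∨ (j.val + 1) % N = i.val)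

/-- The unweighted cycle on `Fin N`. -/
noncomputable def cycleWeight (N : ℕ) : Fin N → Fin N → ℝ := fun i j =>
  if (i.val + 1) % N = j.val ∨ (j.val + 1) % N = i.val then 1 else 0

lemma Ew_nonneg {N : ℕ} {w : Fin N → Fin N → ℝ} (hw : ∀ u v, 0 ≤ w u v)
    (A B : Finset (Fin N)) : 0 ≤ Ew w A B :=
  Finset.sum_nonneg fun u _ => Finset.sum_nonneg fun v _ => hw u v

lemma Ew_symm {N : ℕ} {w : Fin N → Fin N → ℝ} (hw : ∀ u v, w u v = w v u)
    (A B : Finset (Fin N)) : Ew w A B = Ew w B A := by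
  unfold Ew
  rw [Finset.sum_comm]
  exact Finset.sum_congr rfl fun u _ => Finset.sum_congr rfl fun v _ => hw v u

/-- Proposition 3.1 (iii): if `h(k) + h̄(k) = 1`, then in a `k`-sub-bipartition
attaining `h̄(k)`, the pair with maximal expansion is bipartite. -/
theorem max_expansion_pair_bipartite {N : ℕ} (w : Fin N → Fin N → ℝ)
    (hG : IsWeightedGraph w) (k : ℕ) (hk : 1 ≤ k) (hkN : k ≤ N)
    (hsum : cheeger w k + dualCheeger w k = 1)
    (P : Fin k → Finset (Fin N) × Finset (Fin N))
    (hP : IsSubBipartition k P)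
    (hPattains : (⨅ i, phibar w (P i).1 (P i).2) = dualCheeger w k)
    (i₀ : Fin k)
    (hi₀ : ∀ i, expansion w ((P i).1 ∪ (P i).2) ≤ expansion w ((P i₀).1 ∪ (P i₀).2)) :
    Ew w (P i₀).1 (P i₀).1 = 0 ∧ Ew w (P i₀).2 (P i₀).2 = 0 := by
  obtain ⟨hsymm, hnn, -, hdeg⟩ := hG
  obtain ⟨hdisj, hpdisj, hne⟩ := hP
  have hknz : Nonempty (Fin k) := ⟨⟨0, hk⟩⟩
  set S : Fin k → Finset (Fin N) := fun i => (P i).1 ∪ (P i).2 with hS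
  -- expansions are nonneg
  have hexp_nonneg : ∀ T : Finset (Fin N), 0 ≤ expansion w T := by
    intro T
    have hvT : 0 ≤ vol w T := Finset.sum_nonneg fun u _ => (hdeg u).le
    exact div_nonneg (Ew_nonneg hnn _ _) hvT
  -- h(k) ≤ φ(S i₀)
  have h1 : cheeger w k ≤ expansion w (S i₀) := by
    have hmem : (⨆ i, expansion w (S i)) ∈
        { x | ∃ Q : Fin k → Finset (Fin N), IsSubpartition k Q ∧
          x = ⨆ i, expansion w (Q i) } :=
      ⟨S, ⟨hne, fun i j hij => hpdisj i j hij⟩, rfl⟩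
    have hbdd : BddBelow { x | ∃ Q : Fin k → Finset (Fin N), IsSubpartition k Q ∧
        x = ⨆ i, expansion w (Q i) } := by
      refine ⟨0, fun x hx => ?_⟩
      obtain ⟨Q, -, rfl⟩ := hx
      have := le_ciSup (Set.Finite.bddAbove (Set.finite_range _))
        (Classical.arbitrary (Fin k)) (f := fun i => expansion w (Q i))
      exact le_trans (hexp_nonneg _) this
    have h2 : (⨆ i, expansion w (S i)) ≤ expansion w (S i₀) := ciSup_le hi₀
    exact le_trans (csInf_le hbdd hmem) h2
  -- h̄(k) ≤ φ̄(V₁,V₂) at i₀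
  have h2 : dualCheeger w k ≤ phibar w (P i₀).1 (P i₀).2 := by
    rw [← hPattains]
    exact ciInf_le (Set.Finite.bddBelow (Set.finite_range _)) i₀
  have hkey : (1 : ℝ) ≤ expansion w (S i₀) + phibar w (P i₀).1 (P i₀).2 := by
    rw [← hsum]; exact add_le_add h1 h2
  -- volume positivity
  have hvol : 0 < vol w (S i₀) :=
    Finset.sum_pos (fun u _ => hdeg u) (hne i₀)
  -- total: Ew S₀ S₀ + Ew S₀ S₀ᶜ = vol S₀
  have htot : Ew w (S i₀) (S i₀) + Ew w (S i₀) (S i₀)ᶜ = vol w (S i₀) := by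
    unfold Ew vol degree
    rw [← Finset.sum_add_distrib]
    exact Finset.sum_congr rfl fun u _ => Finset.sum_add_sum_compl _ _
  -- decomposition of Ew S₀ S₀
  have hdecomp : Ew w (S i₀) (S i₀) =
      Ew w (P i₀).1 (P i₀).1 + Ew w (P i₀).2 (P i₀).2 + 2 * Ew w (P i₀).1 (P i₀).2 := by
    have hd := hdisj i₀
    have h21 : Ew w (P i₀).2 (P i₀).1 = Ew w (P i₀).1 (P i₀).2 := Ew_symm hsymm _ _
    have hsplit : ∀ B : Finset (Fin N), Ew w (S i₀) B = Ew w (P i₀).1 B + Ew w (P i₀).2 B := by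
      intro B; unfold Ew; exact Finset.sum_union hd
    have hsplit2 : ∀ A : Finset (Fin N), Ew w A (S i₀) = Ew w A (P i₀).1 + Ew w A (P i₀).2 := by
      intro A; unfold Ew
      rw [← Finset.sum_add_distrib]
      exact Finset.sum_congr rfl fun u _ => Finset.sum_union hd
    rw [hsplit, hsplit2, hsplit2, h21]; ring
  -- from the key inequality: vol ≤ Ew S₀ S₀ᶜ + 2 Ew V₁ V₂
  have hineq : vol w (S i₀) ≤ Ew w (S i₀) (S i₀)ᶜ + 2 * Ew w (P i₀).1 (P i₀).2 := by
    have : (1 : ℝ) ≤ (Ew w (S i₀) (S i₀)ᶜ + 2 * Ew w (P i₀).1 (P i₀).2) / vol w (S i₀) := by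
      have := hkey
      unfold expansion phibar at this
      rw [← add_div] at this
      exact this
    calc vol w (S i₀) = 1 * vol w (S i₀) := (one_mul _).symm
      _ ≤ (Ew w (S i₀) (S i₀)ᶜ + 2 * Ew w (P i₀).1 (P i₀).2) / vol w (S i₀) * vol w (S i₀) :=
          mul_le_mul_of_nonneg_right this hvol.le
      _ = _ := div_mul_cancel₀ _ hvol.ne'
  have e1 : 0 ≤ Ew w (P i₀).1 (P i₀).1 := Ew_nonneg hnn _ _
  have e2 : 0 ≤ Ew w (P i₀).2 (P i₀).2 := Ew_nonneg hnn _ _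
  constructor <;> linarith [htot, hdecomp, hineq]

end DualCheeger
end

section
/- If G is a bipartite weighted finite graph with N ≥ 2 vertices, then 2 − λ_{N−1} ≥ (1 − h̄(2))²/2. -/
open Finset

namespace DualCheeger

variable {N : ℕ}

section AuxProof

variable {N : ℕ}

lemma col_sum (w : Fin N → Fin N → ℝ) (hsym : ∀ u v, w u v = w v u) (v : Fin N) :
    ∑ u, w u v = degree w v :=
  Finset.sum_congr rfl fun u _ => hsym u v

lemma vol_pos' (w : Fin N → Fin N → ℝ) (hdeg : ∀ u, 0 < degree w u)
    {S : Finset (Fin N)} (hS : S.Nonempty) : 0 < vol w S :=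
  Finset.sum_pos (fun u _ => hdeg u) hS

lemma Ew_comm' (w : Fin N → Fin N → ℝ) (hsym : ∀ u v, w u v = w v u)
    (A B : Finset (Fin N)) : Ew w A B = Ew w B A := by
  rw [Ew, Ew, Finset.sum_comm]
  exact Finset.sum_congr rfl fun v _ => Finset.sum_congr rfl fun u _ => hsym u v

lemma Ew_le_vol' (w : Fin N → Fin N → ℝ) (hw0 : ∀ u v, 0 ≤ w u v)
    (A B : Finset (Fin N)) : Ew w A B ≤ vol w A :=
  Finset.sum_le_sum fun u _ =>
    Finset.sum_le_sum_of_subset_of_nonneg (Finset.subset_univ B) (fun v _ _ => hw0 u v)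

lemma double_sum_right (w : Fin N → Fin N → ℝ) (hsym : ∀ u v, w u v = w v u)
    (ψ : Fin N → ℝ) : ∑ u, ∑ v, w u v * ψ v = ∑ u, degree w u * ψ u := by
  rw [Finset.sum_comm]
  refine Finset.sum_congr rfl fun v _ => ?_
  rw [← Finset.sum_mul, col_sum w hsym v]

lemma double_sum_left (w : Fin N → Fin N → ℝ) (ψ : Fin N → ℝ) :
    ∑ u, ∑ v, w u v * ψ u = ∑ u, degree w u * ψ u := by
  refine Finset.sum_congr rfl fun u _ => ?_
  rw [← Finset.sum_mul]
  rfl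

lemma Q_expand (w : Fin N → Fin N → ℝ) (hsym : ∀ u v, w u v = w v u) (g : Fin N → ℝ) :
    ∑ u, ∑ v, w u v * (g u - g v) ^ 2
      = 2 * (∑ u, degree w u * g u ^ 2) - 2 * ∑ u, ∑ v, w u v * (g u * g v) := by
  have h1 : ∀ u, ∑ v, w u v * (g u - g v) ^ 2
      = (∑ v, w u v * g u ^ 2) + (∑ v, w u v * g v ^ 2)
        - 2 * ∑ v, w u v * (g u * g v) := by
    intro u
    rw [← Finset.sum_add_distrib, Finset.mul_sum, ← Finset.sum_sub_distrib]
    exact Finset.sum_congr rfl fun v _ => by ring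
  calc ∑ u, ∑ v, w u v * (g u - g v) ^ 2
      = ∑ u, ((∑ v, w u v * g u ^ 2) + (∑ v, w u v * g v ^ 2)
          - 2 * ∑ v, w u v * (g u * g v)) := Finset.sum_congr rfl fun u _ => h1 u
    _ = (∑ u, ∑ v, w u v * g u ^ 2) + (∑ u, ∑ v, w u v * g v ^ 2)
          - 2 * ∑ u, ∑ v, w u v * (g u * g v) := by
        rw [Finset.sum_sub_distrib, Finset.sum_add_distrib, Finset.mul_sum]
    _ = _ := by
        rw [double_sum_left w (fun x => g x ^ 2), double_sum_right w hsym (fun x => g x ^ 2)]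
        ring

lemma gamma_nonneg (w : Fin N → Fin N → ℝ) (hsym : ∀ u v, w u v = w v u)
    (hw0 : ∀ u v, 0 ≤ w u v) {h : Fin N → ℝ} {γ : ℝ}
    (he : ∀ u, ∑ v, w u v * h v = degree w u * ((1 - γ) * h u))
    (hn : ∑ u, degree w u * h u ^ 2 = 1) : 0 ≤ γ := by
  have hcross : ∑ u, ∑ v, w u v * (h u * h v) = 1 - γ := by
    have e : ∀ u, ∑ v, w u v * (h u * h v) = (1 - γ) * (degree w u * h u ^ 2) := by
      intro u
      have e2 : ∑ v, w u v * (h u * h v) = h u * ∑ v, w u v * h v := by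
        rw [Finset.mul_sum]; exact Finset.sum_congr rfl fun v _ => by ring
      rw [e2, he u]; ring
    rw [Finset.sum_congr rfl fun u _ => e u, ← Finset.mul_sum, hn, mul_one]
  have hQ0 : 0 ≤ ∑ u, ∑ v, w u v * (h u - h v) ^ 2 :=
    Finset.sum_nonneg fun u _ => Finset.sum_nonneg fun v _ => mul_nonneg (hw0 u v) (sq_nonneg _)
  rw [Q_expand w hsym h, hn, hcross] at hQ0
  linarith

lemma part_bound (w : Fin N → Fin N → ℝ) (hsym : ∀ u v, w u v = w v u)
    (hw0 : ∀ u v, 0 ≤ w u v) {h p : Fin N → ℝ} {γ β : ℝ} (hγ : γ ≤ β)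
    (he : ∀ u, ∑ v, w u v * h v = degree w u * ((1 - γ) * h u))
    (hdeg0 : ∀ u, 0 ≤ degree w u)
    (hp0 : ∀ u, 0 ≤ p u) (hph : ∀ u, p u * h u = p u ^ 2) (hhp : ∀ u, h u ≤ p u) :
    ∑ u, ∑ v, w u v * (p u - p v) ^ 2 ≤ 2 * β * ∑ u, degree w u * p u ^ 2 := by
  have hM0 : 0 ≤ ∑ u, degree w u * p u ^ 2 :=
    Finset.sum_nonneg fun u _ => mul_nonneg (hdeg0 u) (sq_nonneg _)
  have key : (1 - γ) * ∑ u, degree w u * p u ^ 2 ≤ ∑ u, ∑ v, w u v * (p u * p v) := by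
    have t1 : ∀ u, (1 - γ) * (degree w u * p u ^ 2) = ∑ v, w u v * (p u * h v) := by
      intro u
      have e : ∑ v, w u v * (p u * h v) = p u * ∑ v, w u v * h v := by
        rw [Finset.mul_sum]; exact Finset.sum_congr rfl fun v _ => by ring
      rw [e, he u, ← hph u]; ring
    calc (1 - γ) * ∑ u, degree w u * p u ^ 2
        = ∑ u, ∑ v, w u v * (p u * h v) := by
          rw [Finset.mul_sum]; exact Finset.sum_congr rfl fun u _ => t1 u
      _ ≤ ∑ u, ∑ v, w u v * (p u * p v) :=
          Finset.sum_le_sum fun u _ => Finset.sum_le_sum fun v _ =>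
            mul_le_mul_of_nonneg_left (mul_le_mul_of_nonneg_left (hhp v) (hp0 u)) (hw0 u v)
  rw [Q_expand w hsym p]
  nlinarith [key, hM0, hγ]

lemma coarea (w : Fin N → Fin N → ℝ) (hsym : ∀ u v, w u v = w v u) (c : ℝ) :
    ∀ n (φ : Fin N → ℝ), (univ.filter fun u => φ u ≠ 0).card ≤ n → (∀ u, 0 ≤ φ u) →
    (∀ t : ℝ, 0 < t → ((univ.filter fun u => t ≤ φ u).Nonempty) →
        c * vol w (univ.filter fun u => t ≤ φ u) <
          Ew w (univ.filter fun u => t ≤ φ u) (univ.filter fun u => t ≤ φ u)ᶜ) →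
    (∃ u, φ u ≠ 0) →
    2 * c * ∑ u, degree w u * φ u < ∑ u, ∑ v, w u v * |φ u - φ v| := by
  intro n
  induction n with
  | zero =>
      intro φ hcard _ _ hne
      exfalso
      obtain ⟨u, hu⟩ := hne
      have hmem : u ∈ univ.filter fun u => φ u ≠ 0 := by simp [hu]
      have := Finset.card_pos.mpr ⟨u, hmem⟩
      omega
  | succ n ih =>
      intro φ hcard hφ0 hyp hne
      obtain ⟨u₀, hu₀⟩ := hne
      have hu₀p : 0 < φ u₀ := (hφ0 u₀).lt_of_ne (Ne.symm hu₀)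
      set T : Finset ℝ := (univ.filter fun u => 0 < φ u).image φ with hT
      have hTne : T.Nonempty := ⟨φ u₀, Finset.mem_image.mpr ⟨u₀, by simp [hu₀p], rfl⟩⟩
      set t := T.min' hTne with ht
      obtain ⟨u₁, hu₁mem, hu₁⟩ := Finset.mem_image.mp (T.min'_mem hTne)
      rw [← ht] at hu₁
      have htpos : 0 < t := by
        rw [← hu₁]
        exact (Finset.mem_filter.mp hu₁mem).2
      have htmin : ∀ u, 0 < φ u → t ≤ φ u := fun u hu =>
        T.min'_le _ (Finset.mem_image.mpr ⟨u, by simp [hu], rfl⟩)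
      have hzero : ∀ u, ¬ t ≤ φ u → φ u = 0 := by
        intro u h
        by_contra h0
        exact h (htmin u ((hφ0 u).lt_of_ne (Ne.symm h0)))
      set S := univ.filter fun u => t ≤ φ u with hS
      have hmemS : ∀ u, u ∈ S ↔ t ≤ φ u := by intro u; rw [hS]; simp
      have hSne : S.Nonempty := ⟨u₁, (hmemS u₁).mpr (le_of_eq hu₁.symm)⟩
      set φ' : Fin N → ℝ := fun u => φ u - if t ≤ φ u then t else 0 with hφ'
      have hφ'0 : ∀ u, 0 ≤ φ' u := by
        intro u
        simp only [hφ']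
        by_cases h : t ≤ φ u
        · rw [if_pos h]; linarith
        · rw [if_neg h]; simpa using hφ0 u
      have hφ'zero : ∀ u, ¬ t ≤ φ u → φ' u = 0 := by
        intro u h
        simp only [hφ']
        rw [if_neg h, hzero u h]
        ring
      have hlevel : ∀ s : ℝ, 0 < s →
          (univ.filter fun u => s ≤ φ' u) = (univ.filter fun u => s + t ≤ φ u) := by
        intro s hs
        ext u
        simp only [Finset.mem_filter, Finset.mem_univ, true_and]
        by_cases h : t ≤ φ u
        · simp only [hφ']
          rw [if_pos h]
          constructor <;> intro <;> linarith
        · rw [hφ'zero u h, hzero u h]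
          constructor <;> intro hh <;> linarith
      have hu₁supp : u₁ ∈ univ.filter fun u => φ u ≠ 0 := by
        simp only [Finset.mem_filter, Finset.mem_univ, true_and]
        rw [hu₁]; exact htpos.ne'
      have hsupp : (univ.filter fun u => φ' u ≠ 0) ⊆ (univ.filter fun u => φ u ≠ 0).erase u₁ := by
        intro u hu
        simp only [Finset.mem_filter, Finset.mem_univ, true_and] at hu
        have h1 : t ≤ φ u := by
          by_contra h
          exact hu (hφ'zero u h)
        refine Finset.mem_erase.mpr ⟨?_, ?_⟩
        · rintro rfl
          apply hu
          simp only [hφ']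
          rw [if_pos h1, hu₁, sub_self]
        · simp only [Finset.mem_filter, Finset.mem_univ, true_and]
          exact (lt_of_lt_of_le htpos h1).ne'
      have hcard' : (univ.filter fun u => φ' u ≠ 0).card ≤ n := by
        have h2 := Finset.card_le_card hsupp
        rw [Finset.card_erase_of_mem hu₁supp] at h2
        omega
      have hypS : c * vol w S < Ew w S Sᶜ := hyp t htpos hSne
      have hM : ∑ u, degree w u * φ u = (∑ u, degree w u * φ' u) + t * vol w S := by
        have e : ∀ u, degree w u * φ u
            = degree w u * φ' u + (if u ∈ S then degree w u * t else 0) := by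
          intro u
          by_cases h : t ≤ φ u
          · rw [if_pos ((hmemS u).mpr h)]
            simp only [hφ']
            rw [if_pos h]; ring
          · rw [if_neg (fun hh => h ((hmemS u).mp hh))]
            simp only [hφ']
            rw [if_neg h]; ring
        calc ∑ u, degree w u * φ u
            = ∑ u, (degree w u * φ' u + if u ∈ S then degree w u * t else 0) :=
              Finset.sum_congr rfl fun u _ => e u
          _ = (∑ u, degree w u * φ' u) + ∑ u, (if u ∈ S then degree w u * t else 0) :=
              Finset.sum_add_distrib
          _ = (∑ u, degree w u * φ' u) + ∑ u ∈ S, degree w u * t := by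
              rw [Finset.sum_ite_mem, Finset.univ_inter]
          _ = (∑ u, degree w u * φ' u) + t * vol w S := by
              rw [← Finset.sum_mul, mul_comm]
              rfl
      have hptwise : ∀ u v, |φ u - φ v| = |φ' u - φ' v|
          + t * |(if u ∈ S then (1:ℝ) else 0) - (if v ∈ S then (1:ℝ) else 0)| := by
        intro u v
        by_cases hu : t ≤ φ u <;> by_cases hv : t ≤ φ v
        · rw [if_pos ((hmemS u).mpr hu), if_pos ((hmemS v).mpr hv)]
          have e : φ' u - φ' v = φ u - φ v := by
            simp only [hφ']
            rw [if_pos hu, if_pos hv]; ring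
          rw [e]; simp
        · rw [if_pos ((hmemS u).mpr hu), if_neg (fun hh => hv ((hmemS v).mp hh))]
          have h0 : φ v = 0 := hzero v hv
          have e1 : φ' u = φ u - t := by simp only [hφ']; rw [if_pos hu]
          have e2 : φ' v = 0 := hφ'zero v hv
          rw [e1, e2, h0]
          rw [abs_of_nonneg (by linarith : (0:ℝ) ≤ φ u - 0),
            abs_of_nonneg (by linarith : (0:ℝ) ≤ φ u - t - 0),
            abs_of_nonneg (by norm_num : (0:ℝ) ≤ (1:ℝ) - 0)]
          ring
        · rw [if_neg (fun hh => hu ((hmemS u).mp hh)), if_pos ((hmemS v).mpr hv)]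
          have h0 : φ u = 0 := hzero u hu
          have e1 : φ' v = φ v - t := by simp only [hφ']; rw [if_pos hv]
          have e2 : φ' u = 0 := hφ'zero u hu
          rw [e1, e2, h0]
          rw [abs_of_nonpos (by linarith : (0:ℝ) - φ v ≤ 0),
            abs_of_nonpos (by linarith : (0:ℝ) - (φ v - t) ≤ 0),
            abs_of_nonpos (by norm_num : (0:ℝ) - 1 ≤ 0)]
          ring
        · rw [if_neg (fun hh => hu ((hmemS u).mp hh)), if_neg (fun hh => hv ((hmemS v).mp hh))]
          rw [hzero u hu, hzero v hv, hφ'zero u hu, hφ'zero v hv]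
          simp
      have hIB : ∑ u, ∑ v, w u v *
          |(if u ∈ S then (1:ℝ) else 0) - (if v ∈ S then (1:ℝ) else 0)| = 2 * Ew w S Sᶜ := by
        have hrow1 : ∀ u ∈ S, (∑ v, w u v *
            |(if u ∈ S then (1:ℝ) else 0) - (if v ∈ S then (1:ℝ) else 0)|) = ∑ v ∈ Sᶜ, w u v := by
          intro u hu
          rw [← Finset.sum_add_sum_compl S
            (fun v => w u v * |(if u ∈ S then (1:ℝ) else 0) - (if v ∈ S then (1:ℝ) else 0)|)]
          have z1 : ∑ v ∈ S, w u v *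
              |(if u ∈ S then (1:ℝ) else 0) - (if v ∈ S then (1:ℝ) else 0)| = 0 :=
            Finset.sum_eq_zero fun v hv => by rw [if_pos hu, if_pos hv]; simp
          have z2 : ∑ v ∈ Sᶜ, w u v *
              |(if u ∈ S then (1:ℝ) else 0) - (if v ∈ S then (1:ℝ) else 0)| = ∑ v ∈ Sᶜ, w u v :=
            Finset.sum_congr rfl fun v hv => by
              rw [if_pos hu, if_neg (Finset.mem_compl.mp hv)]; simp
          rw [z1, z2, zero_add]
        have hrow2 : ∀ u ∈ Sᶜ, (∑ v, w u v *
            |(if u ∈ S then (1:ℝ) else 0) - (if v ∈ S then (1:ℝ) else 0)|) = ∑ v ∈ S, w u v := by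
          intro u hu
          rw [← Finset.sum_add_sum_compl S
            (fun v => w u v * |(if u ∈ S then (1:ℝ) else 0) - (if v ∈ S then (1:ℝ) else 0)|)]
          have z1 : ∑ v ∈ S, w u v *
              |(if u ∈ S then (1:ℝ) else 0) - (if v ∈ S then (1:ℝ) else 0)| = ∑ v ∈ S, w u v :=
            Finset.sum_congr rfl fun v hv => by
              rw [if_neg (Finset.mem_compl.mp hu), if_pos hv]; simp
          have z2 : ∑ v ∈ Sᶜ, w u v *
              |(if u ∈ S then (1:ℝ) else 0) - (if v ∈ S then (1:ℝ) else 0)| = 0 :=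
            Finset.sum_eq_zero fun v hv => by
              rw [if_neg (Finset.mem_compl.mp hu), if_neg (Finset.mem_compl.mp hv)]; simp
          rw [z1, z2, add_zero]
        calc ∑ u, ∑ v, w u v *
            |(if u ∈ S then (1:ℝ) else 0) - (if v ∈ S then (1:ℝ) else 0)|
            = (∑ u ∈ S, ∑ v, w u v *
                |(if u ∈ S then (1:ℝ) else 0) - (if v ∈ S then (1:ℝ) else 0)|)
              + ∑ u ∈ Sᶜ, ∑ v, w u v *
                |(if u ∈ S then (1:ℝ) else 0) - (if v ∈ S then (1:ℝ) else 0)| :=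
              (Finset.sum_add_sum_compl S _).symm
          _ = (∑ u ∈ S, ∑ v ∈ Sᶜ, w u v) + ∑ u ∈ Sᶜ, ∑ v ∈ S, w u v := by
              rw [Finset.sum_congr rfl hrow1, Finset.sum_congr rfl hrow2]
          _ = Ew w S Sᶜ + Ew w Sᶜ S := rfl
          _ = 2 * Ew w S Sᶜ := by rw [Ew_comm' w hsym Sᶜ S]; ring
      have hsplit : ∑ u, ∑ v, w u v * |φ u - φ v|
          = (∑ u, ∑ v, w u v * |φ' u - φ' v|) + t * (2 * Ew w S Sᶜ) := by
        calc ∑ u, ∑ v, w u v * |φ u - φ v|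
            = ∑ u, ∑ v, (w u v * |φ' u - φ' v| + t * (w u v *
                |(if u ∈ S then (1:ℝ) else 0) - (if v ∈ S then (1:ℝ) else 0)|)) := by
              refine Finset.sum_congr rfl fun u _ => Finset.sum_congr rfl fun v _ => ?_
              rw [hptwise u v]; ring
          _ = (∑ u, ∑ v, w u v * |φ' u - φ' v|) + t * ∑ u, ∑ v, (w u v *
                |(if u ∈ S then (1:ℝ) else 0) - (if v ∈ S then (1:ℝ) else 0)|) := by
              simp only [Finset.sum_add_distrib, ← Finset.mul_sum]
          _ = _ := by rw [hIB]
      have hyp' : ∀ s : ℝ, 0 < s → ((univ.filter fun u => s ≤ φ' u).Nonempty) →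
          c * vol w (univ.filter fun u => s ≤ φ' u) <
            Ew w (univ.filter fun u => s ≤ φ' u) (univ.filter fun u => s ≤ φ' u)ᶜ := by
        intro s hs hne'
        rw [hlevel s hs] at hne' ⊢
        exact hyp (s + t) (by linarith) hne'
      have h2 : 2 * t * (c * vol w S) < 2 * t * Ew w S Sᶜ :=
        mul_lt_mul_of_pos_left hypS (by linarith)
      by_cases hφ'ne : ∃ u, φ' u ≠ 0
      · have IH := ih φ' hcard' hφ'0 hyp' hφ'ne
        rw [hM, hsplit]
        nlinarith [IH, h2]
      · push_neg at hφ'ne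
        have hM0 : ∑ u, degree w u * φ' u = 0 :=
          Finset.sum_eq_zero fun u _ => by rw [hφ'ne u, mul_zero]
        have hF0 : ∑ u, ∑ v, w u v * |φ' u - φ' v| = 0 :=
          Finset.sum_eq_zero fun u _ => Finset.sum_eq_zero fun v _ => by
            rw [hφ'ne u, hφ'ne v]; simp
        rw [hM, hsplit, hM0, hF0]
        nlinarith [h2]

lemma sweep (w : Fin N → Fin N → ℝ) (hsym : ∀ u v, w u v = w v u)
    (hw0 : ∀ u v, 0 ≤ w u v) (hdeg : ∀ u, 0 < degree w u) {g : Fin N → ℝ} {β : ℝ}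
    (hβ : 0 ≤ β) (hg0 : ∀ u, 0 ≤ g u) (hgne : ∃ u, g u ≠ 0)
    (hQ : ∑ u, ∑ v, w u v * (g u - g v) ^ 2 ≤ 2 * β * ∑ u, degree w u * g u ^ 2) :
    ∃ S : Finset (Fin N), S.Nonempty ∧ (∀ u ∈ S, g u ≠ 0) ∧
      Ew w S Sᶜ ≤ Real.sqrt (2 * β) * vol w S := by
  by_contra hcon
  push_neg at hcon
  set c := Real.sqrt (2 * β) with hcdef
  set M := ∑ u, degree w u * g u ^ 2 with hMdef
  have hM0 : 0 ≤ M := Finset.sum_nonneg fun u _ => mul_nonneg (hdeg u).le (sq_nonneg _)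
  have hcoarea := coarea w hsym c univ.card (fun u => g u ^ 2)
    (Finset.card_filter_le _ _) (fun u => sq_nonneg _) ?hyp ?ne
  case hyp =>
    intro t ht hne
    refine hcon _ hne fun u hu => ?_
    have h2 : t ≤ g u ^ 2 := (Finset.mem_filter.mp hu).2
    intro h0
    rw [h0] at h2
    norm_num at h2
    linarith
  case ne =>
    obtain ⟨u, hu⟩ := hgne
    exact ⟨u, pow_ne_zero 2 hu⟩
  have key : 2 * c * M < ∑ u, ∑ v, w u v * |g u ^ 2 - g v ^ 2| := hcoarea
  set F := ∑ u, ∑ v, w u v * |g u ^ 2 - g v ^ 2| with hFdef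
  have cs : F ^ 2 ≤ (∑ u, ∑ v, w u v * (g u - g v) ^ 2) * (∑ u, ∑ v, w u v * (g u + g v) ^ 2) := by
    have e1 : ∀ u v, w u v * |g u ^ 2 - g v ^ 2|
        = (Real.sqrt (w u v) * |g u - g v|) * (Real.sqrt (w u v) * (g u + g v)) := by
      intro u v
      have h1 : |g u ^ 2 - g v ^ 2| = |g u - g v| * (g u + g v) := by
        rw [show g u ^ 2 - g v ^ 2 = (g u - g v) * (g u + g v) by ring, abs_mul,
          abs_of_nonneg (add_nonneg (hg0 u) (hg0 v))]
      calc w u v * |g u ^ 2 - g v ^ 2|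
          = (Real.sqrt (w u v) * Real.sqrt (w u v)) * (|g u - g v| * (g u + g v)) := by
            rw [Real.mul_self_sqrt (hw0 u v), h1]
        _ = _ := by ring
    have E1 : F = ∑ p : Fin N × Fin N,
        (Real.sqrt (w p.1 p.2) * |g p.1 - g p.2|) * (Real.sqrt (w p.1 p.2) * (g p.1 + g p.2)) := by
      rw [hFdef, Fintype.sum_prod_type]
      exact Finset.sum_congr rfl fun u _ => Finset.sum_congr rfl fun v _ => e1 u v
    have E2 : ∑ p : Fin N × Fin N, (Real.sqrt (w p.1 p.2) * |g p.1 - g p.2|) ^ 2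
        = ∑ u, ∑ v, w u v * (g u - g v) ^ 2 := by
      rw [Fintype.sum_prod_type]
      exact Finset.sum_congr rfl fun u _ => Finset.sum_congr rfl fun v _ => by
        rw [mul_pow, Real.sq_sqrt (hw0 u v), sq_abs]
    have E3 : ∑ p : Fin N × Fin N, (Real.sqrt (w p.1 p.2) * (g p.1 + g p.2)) ^ 2
        = ∑ u, ∑ v, w u v * (g u + g v) ^ 2 := by
      rw [Fintype.sum_prod_type]
      exact Finset.sum_congr rfl fun u _ => Finset.sum_congr rfl fun v _ => by
        rw [mul_pow, Real.sq_sqrt (hw0 u v)]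
    rw [E1, ← E2, ← E3]
    exact Finset.sum_mul_sq_le_sq_mul_sq _ _ _
  have hplus : ∑ u, ∑ v, w u v * (g u + g v) ^ 2 ≤ 4 * M := by
    have step : ∑ u, ∑ v, w u v * (g u + g v) ^ 2
        ≤ ∑ u, ∑ v, (2 * (w u v * g u ^ 2) + 2 * (w u v * g v ^ 2)) :=
      Finset.sum_le_sum fun u _ => Finset.sum_le_sum fun v _ => by
        nlinarith [sq_nonneg (g u - g v), hw0 u v]
    have e : ∑ u, ∑ v, (2 * (w u v * g u ^ 2) + 2 * (w u v * g v ^ 2))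
        = 2 * (∑ u, ∑ v, w u v * g u ^ 2) + 2 * (∑ u, ∑ v, w u v * g v ^ 2) := by
      simp only [Finset.sum_add_distrib, ← Finset.mul_sum]
    rw [e, double_sum_left w (fun x => g x ^ 2), double_sum_right w hsym (fun x => g x ^ 2)] at step
    rw [hMdef]
    linarith
  have hplus0 : 0 ≤ ∑ u, ∑ v, w u v * (g u + g v) ^ 2 :=
    Finset.sum_nonneg fun u _ => Finset.sum_nonneg fun v _ => mul_nonneg (hw0 u v) (sq_nonneg _)
  have hQP : F ^ 2 ≤ (2 * β * M) * (4 * M) :=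
    le_trans cs (mul_le_mul hQ hplus hplus0 (by positivity))
  have hc2 : c ^ 2 = 2 * β := Real.sq_sqrt (by linarith)
  have hsq : (2 * c * M) ^ 2 = (2 * β * M) * (4 * M) := by
    rw [show (2 * c * M) ^ 2 = 4 * c ^ 2 * M ^ 2 by ring, hc2]; ring
  have h1 : F ^ 2 ≤ (2 * c * M) ^ 2 := hsq ▸ hQP
  have hF0 : 0 ≤ F :=
    Finset.sum_nonneg fun u _ => Finset.sum_nonneg fun v _ => mul_nonneg (hw0 u v) (abs_nonneg _)
  have hcM : 0 ≤ 2 * c * M := by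
    have : 0 ≤ c := Real.sqrt_nonneg _
    positivity
  nlinarith [h1, hcM, hF0, key]

lemma phibar_le_one' (w : Fin N → Fin N → ℝ) (hsym : ∀ u v, w u v = w v u)
    (hw0 : ∀ u v, 0 ≤ w u v) (hdeg : ∀ u, 0 < degree w u) {V₁ V₂ : Finset (Fin N)}
    (hd : Disjoint V₁ V₂) (hne : (V₁ ∪ V₂).Nonempty) : phibar w V₁ V₂ ≤ 1 := by
  have hvol := vol_pos' w hdeg hne
  rw [phibar, div_le_one hvol]
  have h1 : Ew w V₁ V₂ ≤ vol w V₁ := Ew_le_vol' w hw0 V₁ V₂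
  have h2 : Ew w V₂ V₁ ≤ vol w V₂ := Ew_le_vol' w hw0 V₂ V₁
  have h3 : vol w (V₁ ∪ V₂) = vol w V₁ + vol w V₂ := Finset.sum_union hd
  have h4 : Ew w V₁ V₂ = Ew w V₂ V₁ := Ew_comm' w hsym V₁ V₂
  linarith

lemma phibar_ge' (w : Fin N → Fin N → ℝ) (hsym : ∀ u v, w u v = w v u)
    (hw0 : ∀ u v, 0 ≤ w u v) (hdeg : ∀ u, 0 < degree w u) {A S : Finset (Fin N)}
    (hA1 : ∀ u ∈ A, ∀ v ∈ A, w u v = 0) (hA2 : ∀ u ∈ Aᶜ, ∀ v ∈ Aᶜ, w u v = 0)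
    (hS : S.Nonempty) {c : ℝ} (hc : Ew w S Sᶜ ≤ c * vol w S) :
    1 - c ≤ phibar w (S ∩ A) (S ∩ Aᶜ) := by
  have hdisjA : Disjoint (S ∩ A) (S ∩ Aᶜ) :=
    Finset.disjoint_left.mpr fun x h1 h2 =>
      (Finset.mem_compl.mp (Finset.mem_inter.mp h2).2) (Finset.mem_inter.mp h1).2
  have hU : (S ∩ A) ∪ (S ∩ Aᶜ) = S := by
    ext x
    simp only [Finset.mem_union, Finset.mem_inter, Finset.mem_compl]
    tauto
  have hvol : 0 < vol w S := vol_pos' w hdeg hS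
  have key1 : vol w S = Ew w S S + Ew w S Sᶜ := by
    rw [Ew, Ew, ← Finset.sum_add_distrib]
    exact Finset.sum_congr rfl fun u _ => (Finset.sum_add_sum_compl S _).symm
  have e1 : Ew w S S = Ew w (S ∩ A) S + Ew w (S ∩ Aᶜ) S := by
    rw [Ew, Ew, Ew, ← Finset.sum_union hdisjA, hU]
  have e2 : ∀ X : Finset (Fin N), Ew w X S = Ew w X (S ∩ A) + Ew w X (S ∩ Aᶜ) := by
    intro X
    rw [Ew, Ew, Ew, ← Finset.sum_add_distrib]
    refine Finset.sum_congr rfl fun u _ => ?_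
    rw [← Finset.sum_union hdisjA, hU]
  have zA : Ew w (S ∩ A) (S ∩ A) = 0 :=
    Finset.sum_eq_zero fun u hu => Finset.sum_eq_zero fun v hv =>
      hA1 u (Finset.mem_inter.mp hu).2 v (Finset.mem_inter.mp hv).2
  have zB : Ew w (S ∩ Aᶜ) (S ∩ Aᶜ) = 0 :=
    Finset.sum_eq_zero fun u hu => Finset.sum_eq_zero fun v hv =>
      hA2 u (Finset.mem_inter.mp hu).2 v (Finset.mem_inter.mp hv).2
  have hcomm : Ew w (S ∩ Aᶜ) (S ∩ A) = Ew w (S ∩ A) (S ∩ Aᶜ) := Ew_comm' w hsym _ _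
  have key2 : Ew w S S = 2 * Ew w (S ∩ A) (S ∩ Aᶜ) := by
    have := e2 (S ∩ A)
    have := e2 (S ∩ Aᶜ)
    linarith [e1, e2 (S ∩ A), e2 (S ∩ Aᶜ), zA, zB, hcomm]
  rw [phibar, hU, le_div_iff₀ hvol]
  linarith [hc, key1, key2]

lemma two_nonneg (w : Fin N → Fin N → ℝ) (hsym : ∀ u v, w u v = w v u)
    (hw0 : ∀ u v, 0 ≤ w u v) (hdeg : ∀ u, 0 < degree w u) {β γ₁ γ₂ : ℝ} {h₁ h₂ : Fin N → ℝ}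
    (hγ₁ : γ₁ ≤ β) (hγ₂ : γ₂ ≤ β)
    (he₁ : ∀ u, ∑ v, w u v * h₁ v = degree w u * ((1 - γ₁) * h₁ u))
    (he₂ : ∀ u, ∑ v, w u v * h₂ v = degree w u * ((1 - γ₂) * h₂ u))
    (hn₁ : ∑ u, degree w u * h₁ u ^ 2 = 1) (hn₂ : ∑ u, degree w u * h₂ u ^ 2 = 1)
    (ho : ∑ u, degree w u * (h₁ u * h₂ u) = 0) :
    ∃ g₁ g₂ : Fin N → ℝ, (∀ u, 0 ≤ g₁ u) ∧ (∀ u, 0 ≤ g₂ u) ∧ (∃ u, g₁ u ≠ 0) ∧ (∃ u, g₂ u ≠ 0) ∧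
      (∀ u, g₁ u * g₂ u = 0) ∧
      (∑ u, ∑ v, w u v * (g₁ u - g₁ v) ^ 2 ≤ 2 * β * ∑ u, degree w u * g₁ u ^ 2) ∧
      (∑ u, ∑ v, w u v * (g₂ u - g₂ v) ^ 2 ≤ 2 * β * ∑ u, degree w u * g₂ u ^ 2) := by
  have hdeg0 : ∀ u, 0 ≤ degree w u := fun u => (hdeg u).le
  have posCase : ∀ (h : Fin N → ℝ) (γ : ℝ), γ ≤ β →
      (∀ u, ∑ v, w u v * h v = degree w u * ((1 - γ) * h u)) →
      (∃ u, 0 < h u) → (∃ u, h u < 0) →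
      ∃ g₁ g₂ : Fin N → ℝ, (∀ u, 0 ≤ g₁ u) ∧ (∀ u, 0 ≤ g₂ u) ∧ (∃ u, g₁ u ≠ 0) ∧ (∃ u, g₂ u ≠ 0) ∧
        (∀ u, g₁ u * g₂ u = 0) ∧
        (∑ u, ∑ v, w u v * (g₁ u - g₁ v) ^ 2 ≤ 2 * β * ∑ u, degree w u * g₁ u ^ 2) ∧
        (∑ u, ∑ v, w u v * (g₂ u - g₂ v) ^ 2 ≤ 2 * β * ∑ u, degree w u * g₂ u ^ 2) := by
    intro h γ hγ he hpos hneg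
    refine ⟨fun u => max (h u) 0, fun u => max (-h u) 0,
      fun u => le_max_right _ _, fun u => le_max_right _ _, ?_, ?_, ?_, ?_, ?_⟩
    · obtain ⟨u, hu⟩ := hpos
      exact ⟨u, (lt_of_lt_of_le hu (le_max_left _ _)).ne'⟩
    · obtain ⟨u, hu⟩ := hneg
      exact ⟨u, (lt_of_lt_of_le (neg_pos.mpr hu) (le_max_left _ _)).ne'⟩
    · intro u
      dsimp only
      rcases le_total (h u) 0 with h0 | h0
      · rw [max_eq_right h0]; ring
      · rw [max_eq_right (neg_nonpos.mpr h0)]; ring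
    · refine part_bound w hsym hw0 hγ he hdeg0 (fun u => le_max_right _ _)
        (fun u => ?_) (fun u => le_max_left _ _)
      rcases le_total (h u) 0 with h0 | h0
      · rw [max_eq_right h0]; ring
      · rw [max_eq_left h0]; ring
    · have he' : ∀ u, ∑ v, w u v * (-h v) = degree w u * ((1 - γ) * (-h u)) := by
        intro u
        calc ∑ v, w u v * (-h v) = ∑ v, -(w u v * h v) :=
              Finset.sum_congr rfl fun v _ => by ring
          _ = -(∑ v, w u v * h v) := by rw [Finset.sum_neg_distrib]
          _ = degree w u * ((1 - γ) * (-h u)) := by rw [he u]; ring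
      refine part_bound w hsym hw0 hγ he' hdeg0 (fun u => le_max_right _ _)
        (fun u => ?_) (fun u => le_max_left _ _)
      rcases le_total (-h u) 0 with h0 | h0
      · rw [max_eq_right h0]; ring
      · rw [max_eq_left h0]; ring
  by_cases hc2 : (∃ u, 0 < h₂ u) ∧ (∃ u, h₂ u < 0)
  · exact posCase h₂ γ₂ hγ₂ he₂ hc2.1 hc2.2
  by_cases hc1 : (∃ u, 0 < h₁ u) ∧ (∃ u, h₁ u < 0)
  · obtain ⟨g₁, g₂, a1, a2, a3, a4, a5, a6, a7⟩ := posCase h₁ γ₁ hγ₁ he₁ hc1.1 hc1.2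
    exact ⟨g₁, g₂, a1, a2, a3, a4, a5, a6, a7⟩
  · have sgn : ∀ h : Fin N → ℝ, ¬((∃ u, 0 < h u) ∧ (∃ u, h u < 0)) →
        ∃ s : ℝ, s * s = 1 ∧ ∀ u, 0 ≤ s * h u := by
      intro h hc
      by_cases hp : ∃ u, 0 < h u
      · have hn' : ¬ ∃ u, h u < 0 := fun hh => hc ⟨hp, hh⟩
        push_neg at hn'
        exact ⟨1, by norm_num, fun u => by simpa using hn' u⟩
      · push_neg at hp
        exact ⟨-1, by norm_num, fun u => by nlinarith [hp u]⟩
    obtain ⟨s₁, hs₁, hg₁0⟩ := sgn h₁ hc1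
    obtain ⟨s₂, hs₂, hg₂0⟩ := sgn h₂ hc2
    have hnn : ∀ (s : ℝ) (h : Fin N → ℝ), s * s = 1 → (∑ u, degree w u * h u ^ 2 = 1) →
        ∑ u, degree w u * (s * h u) ^ 2 = 1 := by
      intro s h hs hn
      calc ∑ u, degree w u * (s * h u) ^ 2
          = ∑ u, (s * s) * (degree w u * h u ^ 2) :=
            Finset.sum_congr rfl fun u _ => by ring
        _ = (s * s) * ∑ u, degree w u * h u ^ 2 := by rw [← Finset.mul_sum]
        _ = 1 := by rw [hs, hn, mul_one]
    have flipeig : ∀ (s : ℝ) (h : Fin N → ℝ) (γ : ℝ),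
        (∀ u, ∑ v, w u v * h v = degree w u * ((1 - γ) * h u)) →
        ∀ u, ∑ v, w u v * (s * h v) = degree w u * ((1 - γ) * (s * h u)) := by
      intro s h γ he u
      calc ∑ v, w u v * (s * h v) = s * ∑ v, w u v * h v := by
            rw [Finset.mul_sum]; exact Finset.sum_congr rfl fun v _ => by ring
        _ = _ := by rw [he u]; ring
    refine ⟨fun u => s₁ * h₁ u, fun u => s₂ * h₂ u, hg₁0, hg₂0, ?_, ?_, ?_, ?_, ?_⟩
    · by_contra hz
      push_neg at hz
      have hz' : ∀ u, s₁ * h₁ u = 0 := hz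
      have h0 : ∑ u, degree w u * (s₁ * h₁ u) ^ 2 = 0 :=
        Finset.sum_eq_zero fun u _ => by rw [hz' u]; ring
      have h1 := hnn s₁ h₁ hs₁ hn₁
      linarith
    · by_contra hz
      push_neg at hz
      have hz' : ∀ u, s₂ * h₂ u = 0 := hz
      have h0 : ∑ u, degree w u * (s₂ * h₂ u) ^ 2 = 0 :=
        Finset.sum_eq_zero fun u _ => by rw [hz' u]; ring
      have h1 := hnn s₂ h₂ hs₂ hn₂
      linarith
    · have hsum : ∑ u, degree w u * ((s₁ * h₁ u) * (s₂ * h₂ u)) = 0 := by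
        calc ∑ u, degree w u * ((s₁ * h₁ u) * (s₂ * h₂ u))
            = ∑ u, (s₁ * s₂) * (degree w u * (h₁ u * h₂ u)) :=
              Finset.sum_congr rfl fun u _ => by ring
          _ = (s₁ * s₂) * ∑ u, degree w u * (h₁ u * h₂ u) := by rw [← Finset.mul_sum]
          _ = 0 := by rw [ho, mul_zero]
      have hall := (Finset.sum_eq_zero_iff_of_nonneg
        (fun u _ => mul_nonneg (hdeg0 u) (mul_nonneg (hg₁0 u) (hg₂0 u)))).mp hsum
      intro u
      show s₁ * h₁ u * (s₂ * h₂ u) = 0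
      have hu := hall u (Finset.mem_univ u)
      rcases mul_eq_zero.mp hu with h | h
      · exact absurd h (hdeg u).ne'
      · exact h
    · exact part_bound w hsym hw0 hγ₁ (flipeig s₁ h₁ γ₁ he₁) hdeg0 hg₁0
        (fun u => by ring) (fun u => le_refl _)
    · exact part_bound w hsym hw0 hγ₂ (flipeig s₂ h₂ γ₂ he₂) hdeg0 hg₂0
        (fun u => by ring) (fun u => le_refl _)

end AuxProof

/-- Corollary 3.3 (i): for bipartite graphs, `2 - λ_{N-1} ≥ (1 - h̄(2))²/2`. -/
theorem bipartite_dual_estimate_two {N : ℕ} (hN : 2 ≤ N)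
    (w : Fin N → Fin N → ℝ) (hG : IsWeightedGraph w) (hB : IsBipartite w)
    (lam : Fin N → ℝ) (f : Fin N → Fin N → ℝ) (hl : IsLapEigenbasis w lam f) :
    (1 - dualCheeger w 2) ^ 2 / 2 ≤ 2 - lam ⟨N - 2, by omega⟩ := by
  obtain ⟨hsym, hw0, hloop, hdeg⟩ := hG
  obtain ⟨A, hA1, hA2⟩ := hB
  obtain ⟨hmono, horth, heig⟩ := hl
  set i₁ : Fin N := ⟨N - 1, by omega⟩ with hi₁
  set i₂ : Fin N := ⟨N - 2, by omega⟩ with hi₂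
  show (1 - dualCheeger w 2) ^ 2 / 2 ≤ 2 - lam i₂
  have heigf : ∀ i u, ∑ v, w u v * f i v = degree w u * ((1 - lam i) * f i u) := by
    intro i u
    have h := heig i u
    have hd := (hdeg u).ne'
    have h2 : (degree w u)⁻¹ * ∑ v, w u v * f i v = (1 - lam i) * f i u := by
      have : (1 - lam i) * f i u = f i u - lam i * f i u := by ring
      rw [this]
      linarith
    calc ∑ v, w u v * f i v
        = degree w u * ((degree w u)⁻¹ * ∑ v, w u v * f i v) := by
          rw [← mul_assoc, mul_inv_cancel₀ hd, one_mul]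
      _ = degree w u * ((1 - lam i) * f i u) := by rw [h2]
  set σ : Fin N → ℝ := fun u => if u ∈ A then 1 else -1 with hσ
  have hσsq : ∀ u, σ u * σ u = 1 := by
    intro u
    by_cases h : u ∈ A <;> simp [hσ, h]
  have hwflip : ∀ u v, w u v * σ v = -σ u * w u v := by
    intro u v
    by_cases huA : u ∈ A <;> by_cases hvA : v ∈ A
    · rw [hA1 u huA v hvA]; ring
    · simp only [hσ, if_pos huA, if_neg hvA]; ring
    · simp only [hσ, if_neg huA, if_pos hvA]; ring
    · rw [hA2 u (Finset.mem_compl.mpr huA) v (Finset.mem_compl.mpr hvA)]; ring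
  have heigh : ∀ i u, ∑ v, w u v * (σ v * f i v)
      = degree w u * ((1 - (2 - lam i)) * (σ u * f i u)) := by
    intro i u
    calc ∑ v, w u v * (σ v * f i v) = ∑ v, -σ u * (w u v * f i v) := by
          refine Finset.sum_congr rfl fun v _ => ?_
          rw [show w u v * (σ v * f i v) = w u v * σ v * f i v by ring, hwflip u v]
          ring
      _ = -σ u * ∑ v, w u v * f i v := by rw [Finset.mul_sum]
      _ = -σ u * (degree w u * ((1 - lam i) * f i u)) := by rw [heigf i u]
      _ = degree w u * ((1 - (2 - lam i)) * (σ u * f i u)) := by ring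
  have hnorm : ∀ i, ∑ u, degree w u * (σ u * f i u) ^ 2 = 1 := by
    intro i
    have e : ∀ u, degree w u * (σ u * f i u) ^ 2 = degree w u * f i u * f i u := by
      intro u
      calc degree w u * (σ u * f i u) ^ 2
          = σ u * σ u * (degree w u * f i u * f i u) := by ring
        _ = degree w u * f i u * f i u := by rw [hσsq u]; ring
    rw [Finset.sum_congr rfl fun u _ => e u]
    simpa using horth i i
  have hβ0 : 0 ≤ 2 - lam i₂ := gamma_nonneg w hsym hw0 (heigh i₂) (hnorm i₂)
  have hγle : 2 - lam i₁ ≤ 2 - lam i₂ := by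
    have hle : lam i₂ ≤ lam i₁ := hmono (by rw [hi₁, hi₂]; exact Fin.mk_le_mk.mpr (by omega))
    linarith
  have ho : ∑ u, degree w u * ((σ u * f i₁ u) * (σ u * f i₂ u)) = 0 := by
    have e : ∀ u, degree w u * ((σ u * f i₁ u) * (σ u * f i₂ u))
        = σ u * σ u * (degree w u * f i₁ u * f i₂ u) := fun u => by ring
    rw [Finset.sum_congr rfl fun u _ => e u,
      Finset.sum_congr rfl fun u _ => by rw [hσsq u, one_mul]]
    have hne : i₁ ≠ i₂ := by
      rw [hi₁, hi₂]
      exact Fin.ne_of_val_ne (by simp; omega)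
    simpa [hne] using horth i₁ i₂
  obtain ⟨g₁, g₂, hg₁0, hg₂0, hg₁ne, hg₂ne, hprod, hQ₁, hQ₂⟩ :=
    two_nonneg w hsym hw0 hdeg hγle (le_refl (2 - lam i₂)) (heigh i₁) (heigh i₂)
      (hnorm i₁) (hnorm i₂) ho
  obtain ⟨S₁, hS₁ne, hS₁g, hS₁E⟩ := sweep w hsym hw0 hdeg hβ0 hg₁0 hg₁ne hQ₁
  obtain ⟨S₂, hS₂ne, hS₂g, hS₂E⟩ := sweep w hsym hw0 hdeg hβ0 hg₂0 hg₂ne hQ₂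
  set c := Real.sqrt (2 * (2 - lam i₂)) with hc
  have hdisj12 : Disjoint S₁ S₂ := by
    rw [Finset.disjoint_left]
    intro u h1 h2
    exact (mul_ne_zero (hS₁g u h1) (hS₂g u h2)) (hprod u)
  have hUS : ∀ S : Finset (Fin N), (S ∩ A) ∪ (S ∩ Aᶜ) = S := by
    intro S
    ext x
    simp only [Finset.mem_union, Finset.mem_inter, Finset.mem_compl]
    tauto
  have hdisjA : ∀ S : Finset (Fin N), Disjoint (S ∩ A) (S ∩ Aᶜ) :=
    fun S => Finset.disjoint_left.mpr fun x h1 h2 =>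
      (Finset.mem_compl.mp (Finset.mem_inter.mp h2).2) (Finset.mem_inter.mp h1).2
  set P : Fin 2 → Finset (Fin N) × Finset (Fin N) :=
    ![(S₁ ∩ A, S₁ ∩ Aᶜ), (S₂ ∩ A, S₂ ∩ Aᶜ)] with hP
  have hsub : IsSubBipartition 2 P := by
    refine ⟨?_, ?_, ?_⟩
    · intro i
      fin_cases i
      · exact hdisjA S₁
      · exact hdisjA S₂
    · intro i j hij
      fin_cases i <;> fin_cases j
      · exact absurd rfl hij
      · exact show Disjoint ((S₁ ∩ A) ∪ (S₁ ∩ Aᶜ)) ((S₂ ∩ A) ∪ (S₂ ∩ Aᶜ)) from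
          (by rw [hUS S₁, hUS S₂]; exact hdisj12)
      · exact show Disjoint ((S₂ ∩ A) ∪ (S₂ ∩ Aᶜ)) ((S₁ ∩ A) ∪ (S₁ ∩ Aᶜ)) from
          (by rw [hUS S₂, hUS S₁]; exact hdisj12.symm)
      · exact absurd rfl hij
    · intro i
      fin_cases i
      · exact show ((S₁ ∩ A) ∪ (S₁ ∩ Aᶜ)).Nonempty from (by rw [hUS S₁]; exact hS₁ne)
      · exact show ((S₂ ∩ A) ∪ (S₂ ∩ Aᶜ)).Nonempty from (by rw [hUS S₂]; exact hS₂ne)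
  have hub : ∀ x ∈ {x | ∃ P : Fin 2 → Finset (Fin N) × Finset (Fin N),
      IsSubBipartition 2 P ∧ x = ⨅ i, phibar w (P i).1 (P i).2}, x ≤ 1 := by
    rintro x ⟨P', hP', rfl⟩
    calc ⨅ i, phibar w (P' i).1 (P' i).2 ≤ phibar w (P' 0).1 (P' 0).2 :=
          ciInf_le (Set.Finite.bddBelow (Set.finite_range _)) 0
      _ ≤ 1 := phibar_le_one' w hsym hw0 hdeg (hP'.1 0) (hP'.2.2 0)
  have hmem : (⨅ i, phibar w (P i).1 (P i).2) ∈ {x | ∃ P : Fin 2 → Finset (Fin N) × Finset (Fin N),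
      IsSubBipartition 2 P ∧ x = ⨅ i, phibar w (P i).1 (P i).2} := ⟨P, hsub, rfl⟩
  have hge : 1 - c ≤ ⨅ i, phibar w (P i).1 (P i).2 := by
    refine le_ciInf fun i => ?_
    fin_cases i
    · exact show 1 - c ≤ phibar w (S₁ ∩ A) (S₁ ∩ Aᶜ) from
        phibar_ge' w hsym hw0 hdeg hA1 hA2 hS₁ne hS₁E
    · exact show 1 - c ≤ phibar w (S₂ ∩ A) (S₂ ∩ Aᶜ) from
        phibar_ge' w hsym hw0 hdeg hA1 hA2 hS₂ne hS₂E
  have hDle : dualCheeger w 2 ≤ 1 := csSup_le ⟨_, hmem⟩ hub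
  have hDge : 1 - c ≤ dualCheeger w 2 := le_trans hge (le_csSup ⟨1, hub⟩ hmem)
  have hc0 : 0 ≤ c := Real.sqrt_nonneg _
  have hc2 : c ^ 2 = 2 * (2 - lam i₂) := Real.sq_sqrt (by linarith)
  have h1 : 0 ≤ 1 - dualCheeger w 2 := by linarith
  have h2 : 1 - dualCheeger w 2 ≤ c := by linarith
  have h3 : (1 - dualCheeger w 2) ^ 2 ≤ c ^ 2 := pow_le_pow_left₀ h1 h2 2
  linarith

end DualCheeger
end
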